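/- Let $m \geq 3$ be odd and let $P_m$ be the vertex set of a regular $m$-gon inscribed in the unit circle with the geodesic metric. Then for every partition of $P_m$ into two nonempty subsets $X_1, X_2$, we have $\max(\operatorname{diam} X_1, \operatorname{diam} X_2) \geq \pi - \frac{\pi}{m}$. -/
import Mathlib

open Real

/-- Vertex set of the regular `n`-gon inscribed in the unit circle, modeled inside
`AddCircle (2π)` whose quotient metric is exactly the geodesic metric
`d(α,β) = min (|α-β|) (2π - |α-β|)`. -/
noncomputable def Pvert (n : ℕ) : Set (AddCircle (2 * π)) :=
  Set.range fun j : Fin n => ((2 * π * j / n : ℝ) : AddCircle (2 * π))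

instance (n : ℕ) : Finite (Pvert n) := by unfold Pvert; exact (Set.finite_range _).to_subtype

lemma coe_sub_nat_period (k : ℕ) (x : ℝ) :
    ((x - k * (2 * π) : ℝ) : AddCircle (2 * π)) = ((x : ℝ) : AddCircle (2 * π)) := by
  induction k with
  | zero => norm_num
  | succ n ih =>
    have h2 := AddCircle.coe_add_period (2 * π) (x - ((n : ℝ) + 1) * (2 * π))
    rw [show x - ((n : ℝ) + 1) * (2 * π) + 2 * π = x - (n : ℝ) * (2 * π) by ring] at h2
    push_cast
    exact h2.symm.trans ih

lemma dist_vertices (m r : ℕ) (hm : m = 2 * r + 1) (hr : 1 ≤ r) (a : ℕ) :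
    dist (((2 * π * (((a + r) % m : ℕ)) / m : ℝ) : AddCircle (2 * π)))
      (((2 * π * a / m : ℝ) : AddCircle (2 * π))) = π - π / m := by
  have hm0 : m ≠ 0 := by omega
  have hmR : (m : ℝ) ≠ 0 := Nat.cast_ne_zero.mpr hm0
  set k := (a + r) / m with hk
  have hdm := Nat.div_add_mod (a + r) m
  have hc : (((a + r) % m : ℕ) : ℝ) = (a : ℝ) + r - m * k := by
    have : ((a + r) % m : ℕ) + m * k = a + r := by rw [hk]; omega
    have := congrArg (Nat.cast : ℕ → ℝ) this
    push_cast at this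
    linarith
  have hx : (2 * π * (((a + r) % m : ℕ) : ℝ) / m - 2 * π * (a : ℝ) / m)
      = 2 * π * r / m - k * (2 * π) := by
    rw [hc]; field_simp; ring
  rw [dist_eq_norm, ← QuotientAddGroup.mk_sub]
  have : ((2 * π * (((a + r) % m : ℕ) : ℝ) / m - 2 * π * (a : ℝ) / m : ℝ) : AddCircle (2 * π))
      = ((2 * π * r / m : ℝ) : AddCircle (2 * π)) := by
    rw [hx, coe_sub_nat_period]
  rw [show QuotientAddGroup.mk (2 * π * (((a + r) % m : ℕ) : ℝ) / m - 2 * π * (a : ℝ) / m)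
      = ((2 * π * (((a + r) % m : ℕ) : ℝ) / m - 2 * π * (a : ℝ) / m : ℝ) : AddCircle (2 * π))
      from rfl, this, AddCircle.norm_eq]
  have hinv : (2 * π)⁻¹ * (2 * π * r / m) = (r : ℝ) / m := by
    field_simp
  have hround : round ((r : ℝ) / m) = 0 := by
    rw [round_eq, Int.floor_eq_zero_iff]
    constructor
    · positivity
    · have : (r : ℝ) / m < 1 / 2 := by
        rw [div_lt_div_iff₀ (by positivity) (by norm_num)]
        have : (m : ℝ) = 2 * r + 1 := by exact_mod_cast congrArg (Nat.cast : ℕ → ℝ) hm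
        linarith
      linarith
  have hmeq : (m : ℝ) = 2 * r + 1 := by exact_mod_cast congrArg (Nat.cast : ℕ → ℝ) hm
  rw [hinv, hround]
  simp only [Int.cast_zero, zero_mul, sub_zero]
  rw [abs_of_nonneg (by positivity), hmeq]
  field_simp
  ring

lemma flip_parity (f : ℕ → Bool) (h : ∀ k, f (k + 1) = ! f k) : ∀ k, f (2 * k) = f 0 := by
  intro k
  induction k with
  | zero => rfl
  | succ n ih =>
    rw [show 2 * (n + 1) = (2 * n + 1) + 1 by ring, h, h, Bool.not_not, ih]

theorem stmt8 (m : ℕ) (hm : 3 ≤ m) (hodd : Odd m)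
    (X1 X2 : Set (Pvert m)) (h1 : X1.Nonempty) (h2 : X2.Nonempty)
    (hdisj : Disjoint X1 X2) (hcover : X1 ∪ X2 = Set.univ) :
    π - π / m ≤ max (Metric.diam X1) (Metric.diam X2) := by
  classical
  haveI : NeZero m := ⟨by omega⟩
  obtain ⟨r0, hr0⟩ := hodd
  have hrm : m = 2 * r0 + 1 := by omega
  have hr1 : 1 ≤ r0 := by omega
  have hvmem : ∀ j : ZMod m, ((2 * π * (j.val : ℝ) / m : ℝ) : AddCircle (2 * π)) ∈ Pvert m := by
    intro j
    exact ⟨⟨j.val, ZMod.val_lt j⟩, rfl⟩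
  set V : ZMod m → Pvert m := fun j => ⟨_, hvmem j⟩ with hV
  set s : ZMod m := ((r0 : ℕ) : ZMod m) with hs
  set c : ZMod m → Bool := fun j => decide (V j ∈ X1) with hc
  have key : ∃ j : ZMod m, c (j + s) = c j := by
    by_contra hno
    push_neg at hno
    have hflip : ∀ j, c (j + s) = ! c j := by
      intro j
      have h := hno j
      revert h
      cases hA : c (j + s) <;> cases hB : c j <;> simp
    set f : ℕ → Bool := fun k => c ((k : ZMod m) * s) with hf
    have hstep : ∀ k, f (k + 1) = ! f k := by
      intro k
      have hcast : ((k + 1 : ℕ) : ZMod m) * s = (k : ZMod m) * s + s := by push_cast; ring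
      simp only [hf, hcast, hflip]
    have heven := flip_parity f hstep r0
    have hfm : f m = f 0 := by
      simp only [hf, ZMod.natCast_self, zero_mul, Nat.cast_zero]
    have hfm' : f m = ! f 0 := by
      rw [hrm, hstep (2 * r0), heven]
    rw [hfm] at hfm'
    simp at hfm'
  obtain ⟨j, hj⟩ := key
  have hdist : dist (V (j + s)) (V j) = π - π / m := by
    rw [Subtype.dist_eq]
    have hsv : s.val = r0 := by
      rw [hs, ZMod.val_natCast, Nat.mod_eq_of_lt (by omega)]
    have hv : (j + s).val = (j.val + r0) % m := by rw [ZMod.val_add, hsv]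
    show dist (((2 * π * ((j + s).val : ℝ) / m : ℝ) : AddCircle (2 * π)))
      (((2 * π * (j.val : ℝ) / m : ℝ) : AddCircle (2 * π))) = π - π / m
    rw [hv]
    exact dist_vertices m r0 hrm hr1 j.val
  have hb1 : Bornology.IsBounded X1 := (Set.toFinite X1).isBounded
  have hb2 : Bornology.IsBounded X2 := (Set.toFinite X2).isBounded
  cases hcj : c j with
  | true =>
    have hmem1 : V j ∈ X1 := by
      have := hcj
      simp only [hc, decide_eq_true_eq] at this
      exact this
    have hmem2 : V (j + s) ∈ X1 := by
      have := hj.trans hcj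
      simp only [hc, decide_eq_true_eq] at this
      exact this
    calc π - π / m = dist (V (j + s)) (V j) := hdist.symm
      _ ≤ Metric.diam X1 := Metric.dist_le_diam_of_mem hb1 hmem2 hmem1
      _ ≤ _ := le_max_left _ _
  | false =>
    have hmem1 : V j ∈ X2 := by
      have hn : V j ∉ X1 := by
        have := hcj
        simp only [hc, decide_eq_false_iff_not] at this
        exact this
      have h := hcover ▸ Set.mem_univ (V j)
      exact h.resolve_left hn
    have hmem2 : V (j + s) ∈ X2 := by
      have hn : V (j + s) ∉ X1 := by
        have := hj.trans hcj
        simp only [hc, decide_eq_false_iff_not] at this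
        exact this
      have h := hcover ▸ Set.mem_univ (V (j + s))
      exact h.resolve_left hn
    calc π - π / m = dist (V (j + s)) (V j) := hdist.symm
      _ ≤ Metric.diam X2 := Metric.dist_le_diam_of_mem hb2 hmem2 hmem1
      _ ≤ _ := le_max_right _ _
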